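/- arXiv:2510.02230 — 3 statements merged into one kernel-verified Lean document; each statement's English description precedes it below -/
import Mathlib

section
/- Let V ≥ 3, z : Fin V → ℝ, y₁ ≠ y₂ in Fin V, η' ∈ ℝ, π = σ(z), and define the MLE-updated logits z'_j = z_j − 2η'π_j + η'·𝟙[j ∈ {y₁, y₂}]. Then for every i ∉ {y₁, y₂}, with π' = σ(z'), the ratio of probabilities satisfies π'_i / π_i = (Σ_j exp(z_j)) / (Σ_j β_j exp(z_j)), where β_j = exp(−2η'(π_j − π_i)) for j ∉ {y₁, y₂} and β_j = exp(−η'(2(π_j − π_i) − 1)) for j ∈ {y₁, y₂}. -/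
/-- The softmax distribution `σ(z)_i = exp(z_i) / ∑_j exp(z_j)`. -/
noncomputable def softmax {V : ℕ} (z : Fin V → ℝ) (i : Fin V) : ℝ :=
  Real.exp (z i) / ∑ j, Real.exp (z j)

/-- Lemma 1, MLE Case 2: after the MLE logit update
`z'_j = z_j − 2η'π_j + η'·𝟙[j ∈ {y₁,y₂}]`, for every `i ∉ {y₁,y₂}` the probability
satisfies `π'_i / π_i = (∑_j exp(z_j)) / (∑_j β_j exp(z_j))` with the stated `β_j`. -/
theorem mle_ratio_case2 {V : ℕ} (hV : 3 ≤ V) (z : Fin V → ℝ)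
    (y₁ y₂ : Fin V) (hy : y₁ ≠ y₂) (η' : ℝ) :
    let π := softmax z
    let z' : Fin V → ℝ := fun j =>
      z j - 2 * η' * π j + η' * (if j = y₁ ∨ j = y₂ then 1 else 0)
    ∀ i : Fin V, i ≠ y₁ → i ≠ y₂ →
      softmax z' i / π i
        = (∑ j, Real.exp (z j)) /
          (∑ j, (if j = y₁ ∨ j = y₂ then Real.exp (-(η' * (2 * (π j - π i) - 1)))
                 else Real.exp (-(2 * η' * (π j - π i)))) * Real.exp (z j)) := by
  intro π z' i hi1 hi2
  have hne : Nonempty (Fin V) := ⟨⟨0, by omega⟩⟩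
  have hpos : ∀ (w : Fin V → ℝ), 0 < ∑ j, Real.exp (w j) := fun w =>
    Finset.sum_pos (fun j _ => Real.exp_pos _) Finset.univ_nonempty
  have hβ : ∑ j, (if j = y₁ ∨ j = y₂ then Real.exp (-(η' * (2 * (π j - π i) - 1)))
                 else Real.exp (-(2 * η' * (π j - π i)))) * Real.exp (z j)
      = Real.exp (2 * η' * π i) * ∑ j, Real.exp (z' j) := by
    rw [Finset.mul_sum]
    refine Finset.sum_congr rfl fun j _ => ?_
    simp only [z']
    by_cases h : j = y₁ ∨ j = y₂ <;> simp only [h, if_true, if_false,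
      ← Real.exp_add] <;> ring_nf
  rw [hβ]
  have h1 : softmax z' i = Real.exp (z i) * Real.exp (-(2 * η' * π i)) /
      ∑ j, Real.exp (z' j) := by
    simp only [softmax]
    congr 1
    rw [← Real.exp_add]
    congr 1
    simp only [z', if_neg (by simp [hi1, hi2] : ¬(i = y₁ ∨ i = y₂))]
    ring
  rw [h1, Real.exp_neg]
  have hπi : π i = Real.exp (z i) / ∑ j, Real.exp (z j) := rfl
  rw [hπi]
  have e1 := Real.exp_pos (z i)
  have e2 := hpos z
  have e3 := hpos z'
  have e4 := Real.exp_pos (2 * η' * (Real.exp (z i) / ∑ j, Real.exp (z j)))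
  field_simp
end

section
/- Let V ≥ 2, z : Fin V → ℝ, y₁ ≠ y₂ in Fin V, η' ∈ ℝ, π = σ(z), Δπ = π_{y₁} + π_{y₂}, and define the REINFORCE-updated logits z'_j = z_j − η'·Δπ·π_j for j ∉ {y₁, y₂} and z'_j = z_j − η'·(Δπ − 1)·π_j for j ∈ {y₁, y₂}. Then, with π' = σ(z') and i = y₁, the ratio of probabilities satisfies π'_i / π_i = (Σ_j exp(z_j)) / (Σ_j γ_j exp(z_j)), where γ_j = exp(−η'(Δπ(π_j − π_i) + π_i)) for j ∉ {y₁, y₂}, γ_{y₁} = 1, and γ_{y₂} = exp(−η'(Δπ − 1)(π_{y₂} − π_i)). -/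
lemma sum_exp_pos {V : ℕ} (z : Fin V → ℝ) (i : Fin V) : 0 < ∑ j, Real.exp (z j) :=
  Finset.sum_pos (fun j _ => Real.exp_pos (z j)) ⟨i, Finset.mem_univ i⟩

theorem softmax_sub_div_softmax {V : ℕ} (z δ : Fin V → ℝ) (i : Fin V) :
    softmax (fun j => z j - δ j) i / softmax z i =
      (∑ j, Real.exp (z j)) / ∑ j, Real.exp (δ i - δ j) * Real.exp (z j) := by
  have hweighted : ∑ j, Real.exp (δ i - δ j) * Real.exp (z j) =
      Real.exp (δ i) * ∑ j, Real.exp (z j - δ j) := by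
    rw [Finset.mul_sum]
    exact Finset.sum_congr rfl fun j _ => by rw [← Real.exp_add, ← Real.exp_add]; ring_nf
  have hS := (sum_exp_pos z i).ne'
  have hS' := (sum_exp_pos (fun j => z j - δ j) i).ne'
  rw [hweighted, softmax, softmax, Real.exp_sub]
  field_simp

theorem reinforce_ratio_case1_general {V : ℕ} (z : Fin V → ℝ)
    (y₁ y₂ : Fin V) (η' : ℝ) :
    let π := softmax z
    let Δπ := π y₁ + π y₂
    let z' : Fin V → ℝ := fun j =>
      if j = y₁ ∨ j = y₂ then z j - η' * ((Δπ - 1) * π j) else z j - η' * (Δπ * π j)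
    let γ : Fin V → ℝ := fun j =>
      if j = y₁ then 1
      else if j = y₂ then Real.exp (-(η' * ((Δπ - 1) * (π y₂ - π y₁))))
      else Real.exp (-(η' * (Δπ * (π j - π y₁) + π y₁)))
    softmax z' y₁ / π y₁ = (∑ j, Real.exp (z j)) / (∑ j, γ j * Real.exp (z j)) := by
  intro π Δπ z' γ
  let δ : Fin V → ℝ := fun j =>
    if j = y₁ ∨ j = y₂ then η' * ((Δπ - 1) * π j) else η' * (Δπ * π j)
  have hz' : z' = fun j => z j - δ j := by
    funext j
    simp only [z', δ]
    split_ifs <;> rfl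
  have hγ : ∀ j, γ j = Real.exp (δ y₁ - δ j) := by
    intro j
    by_cases h₁ : j = y₁
    · simp [γ, h₁]
    by_cases h₂ : j = y₂
    · subst h₂
      simp only [γ, δ, h₁, if_false, true_or, or_true, if_true]
      ring_nf
    · simp only [γ, δ, h₁, h₂, if_false, or_self, true_or, if_true]
      ring_nf
  rw [hz', softmax_sub_div_softmax]
  simp only [hγ]

/-- Lemma 1, REINFORCE Case 1: after the REINFORCE logit update
(`z'_j = z_j − η'Δπ·π_j` off the rewarded set, `z'_j = z_j − η'(Δπ−1)·π_j` on it),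
the probability of `i = y₁` satisfies
`π'_i / π_i = (∑_j exp(z_j)) / (∑_j γ_j exp(z_j))` with the stated `γ_j`. -/
theorem reinforce_ratio_case1 {V : ℕ} (hV : 2 ≤ V) (z : Fin V → ℝ)
    (y₁ y₂ : Fin V) (hy : y₁ ≠ y₂) (η' : ℝ) :
    let π := softmax z
    let Δπ := π y₁ + π y₂
    let z' : Fin V → ℝ := fun j =>
      if j = y₁ ∨ j = y₂ then z j - η' * ((Δπ - 1) * π j) else z j - η' * (Δπ * π j)
    let γ : Fin V → ℝ := fun j =>
      if j = y₁ then 1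
      else if j = y₂ then Real.exp (-(η' * ((Δπ - 1) * (π y₂ - π y₁))))
      else Real.exp (-(η' * (Δπ * (π j - π y₁) + π y₁)))
    softmax z' y₁ / π y₁ = (∑ j, Real.exp (z j)) / (∑ j, γ j * Real.exp (z j)) :=
  reinforce_ratio_case1_general z y₁ y₂ η'
end

section
/- Let V ≥ 3, z : Fin V → ℝ, y₁ ≠ y₂ in Fin V, η' > 0, π = σ(z), Δπ = π_{y₁} + π_{y₂}, and suppose π_{y₁} > π_{y₂}. Define the REINFORCE-updated logits z'_j = z_j − η'·Δπ·π_j for j ∉ {y₁, y₂} and z'_j = z_j − η'·(Δπ − 1)·π_j for j ∈ {y₁, y₂}, and let π' = σ(z'). Then π'_{y₁} / π'_{y₂} > π_{y₁} / π_{y₂}: one REINFORCE step strictly tilts probability toward the already dominant rewarded action. -/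
lemma softmax_pos {V : ℕ} [NeZero V] (z : Fin V → ℝ) (i : Fin V) : 0 < softmax z i := by
  unfold softmax
  exact div_pos (Real.exp_pos _) (Finset.sum_pos (fun j _ => Real.exp_pos _) Finset.univ_nonempty)

lemma softmax_ratio {V : ℕ} (z : Fin V → ℝ) (i j : Fin V) (hV : 0 < V) :
    softmax z i / softmax z j = Real.exp (z i - z j) := by
  have : NeZero V := ⟨hV.ne'⟩
  have hS : (0 : ℝ) < ∑ k, Real.exp (z k) :=
    Finset.sum_pos (fun k _ => Real.exp_pos _) Finset.univ_nonempty
  unfold softmax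
  field_simp
  rw [Real.exp_sub]
  field_simp

/-- Mode concentration: if `π_{y₁} > π_{y₂}` are the two rewarded actions, then one
REINFORCE step strictly tilts probability toward the dominant one:
`π'_{y₁} / π'_{y₂} > π_{y₁} / π_{y₂}`. -/
theorem reinforce_ratio_tilts_to_winner {V : ℕ} (hV : 3 ≤ V) (z : Fin V → ℝ)
    (y₁ y₂ : Fin V) (hy : y₁ ≠ y₂) (η' : ℝ) (hη : 0 < η')
    (hπ : softmax z y₂ < softmax z y₁) :
    let π := softmax z
    let Δπ := π y₁ + π y₂
    let z' : Fin V → ℝ := fun j =>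
      if j = y₁ ∨ j = y₂ then z j - η' * ((Δπ - 1) * π j) else z j - η' * (Δπ * π j)
    softmax z y₁ / softmax z y₂ < softmax z' y₁ / softmax z' y₂ := by
  intro π Δπ z'
  have hV0 : 0 < V := by omega
  have : NeZero V := ⟨hV0.ne'⟩
  -- Δπ < 1
  have hsum : ∑ j, π j = 1 := by
    unfold π
    unfold softmax
    rw [← Finset.sum_div]
    exact div_self (Finset.sum_pos (fun k _ => Real.exp_pos _) Finset.univ_nonempty).ne'
  -- find a third index
  obtain ⟨k, hk1, hk2⟩ : ∃ k : Fin V, k ≠ y₁ ∧ k ≠ y₂ := by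
    have hc2 : ({y₁, y₂} : Finset (Fin V)).card ≤ 2 := by
      have := Finset.card_insert_le y₁ ({y₂} : Finset (Fin V))
      simpa using this
    have hne : (Finset.univ \ ({y₁, y₂} : Finset (Fin V))).Nonempty := by
      rw [Finset.sdiff_nonempty]
      intro hsub
      have hcc := Finset.card_le_card hsub
      simp [Finset.card_univ] at hcc
      omega
    obtain ⟨k, hk⟩ := hne
    simp only [Finset.mem_sdiff, Finset.mem_insert, Finset.mem_singleton] at hk
    exact ⟨k, fun h => hk.2 (Or.inl h), fun h => hk.2 (Or.inr h)⟩
  have hΔ : Δπ < 1 := by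
    have : Δπ + π k ≤ ∑ j, π j := by
      have : ({y₁, y₂, k} : Finset (Fin V)) ⊆ Finset.univ := Finset.subset_univ _
      calc Δπ + π k = ∑ j ∈ ({y₁, y₂, k} : Finset (Fin V)), π j := by
            rw [Finset.sum_insert (by simp [hy, hk1.symm]),
                Finset.sum_insert (by simp [hk2.symm]), Finset.sum_singleton]
            ring
        _ ≤ ∑ j, π j := Finset.sum_le_sum_of_subset_of_nonneg (Finset.subset_univ _)
            (fun j _ _ => (softmax_pos z j).le)
    have hkpos := softmax_pos z k
    linarith [hsum ▸ this]
  rw [softmax_ratio z _ _ hV0, softmax_ratio z' _ _ hV0]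
  apply Real.exp_lt_exp.2
  have h1 : z' y₁ = z y₁ - η' * ((Δπ - 1) * π y₁) := by simp [z']
  have h2 : z' y₂ = z y₂ - η' * ((Δπ - 1) * π y₂) := by simp [z']
  rw [h1, h2]
  have hdiff : 0 < π y₁ - π y₂ := by simpa [π] using sub_pos.2 hπ
  nlinarith [mul_pos hη (mul_pos (by linarith : (0:ℝ) < 1 - Δπ) hdiff)]
end
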